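/- arXiv:2511.23374 — 2 statements merged into one kernel-verified Lean document; each statement's English description precedes it below -/
import Mathlib

section
/- Within the family R^{AB}_i(y,z) = Y/n + (y_i − Y/n)·A(Y/Z) + (z_i − Z/n)·B(Y/Z), stability (R^{AB}(R^{AB}(y,z),z) = R^{AB}(y,z) for all problems) holds if and only if for every value t = Y/Z one has A(t)² = A(t) and B(t)·(1 + A(t)) = B(t); equivalently, at each t, either A(t) = 1 and B(t) = 0, or A(t) = 0 with B(t) arbitrary, provided the family's functional equations are interpreted pointwise in t and n ≥ 2 and the needs profile can be non-constant. -/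
noncomputable def RAB {n : ℕ} (A B : ℝ → ℝ) (y z : Fin n → ℝ) (i : Fin n) : ℝ :=
  (∑ j, y j) / n + (y i - (∑ j, y j) / n) * A ((∑ j, y j) / ∑ j, z j)
    + (z i - (∑ j, z j) / n) * B ((∑ j, y j) / ∑ j, z j)

lemma sum_RAB {n : ℕ} (hn : (n : ℝ) ≠ 0) (A B : ℝ → ℝ) (y z : Fin n → ℝ) :
    ∑ i, RAB A B y z i = ∑ j, y j := by
  simp only [RAB, Finset.sum_add_distrib, ← Finset.sum_mul, Finset.sum_sub_distrib,
    Finset.sum_const, Finset.card_univ, Fintype.card_fin, nsmul_eq_mul]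
  field_simp
  ring

lemma RAB_RAB {n : ℕ} (hn : (n : ℝ) ≠ 0) (A B : ℝ → ℝ) (y z : Fin n → ℝ) (i : Fin n) :
    RAB A B (RAB A B y z) z i =
      (∑ j, y j) / n
        + (y i - (∑ j, y j) / n) * (A ((∑ j, y j) / ∑ j, z j)) ^ 2
        + (z i - (∑ j, z j) / n)
            * (B ((∑ j, y j) / ∑ j, z j) * (1 + A ((∑ j, y j) / ∑ j, z j))) := by
  have hs := sum_RAB hn A B y z
  conv_lhs => rw [RAB, hs, RAB]
  ring

/-- Within the family `R^{AB}`, stability holds iff pointwise `A(t)² = A(t)` and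
`B(t)(1 + A(t)) = B(t)`; equivalently at each `t`, either `A(t)=1 ∧ B(t)=0` or `A(t)=0`. -/
theorem RAB_stability_iff {n : ℕ} (hn : 2 ≤ n) (A B : ℝ → ℝ) :
    ((∀ y z : Fin n → ℝ, (∀ i, 0 ≤ z i) → 0 < ∑ i, z i →
        RAB A B (RAB A B y z) z = RAB A B y z)
      ↔ (∀ t : ℝ, A t ^ 2 = A t ∧ B t * (1 + A t) = B t))
    ∧ ((∀ t : ℝ, A t ^ 2 = A t ∧ B t * (1 + A t) = B t)
      ↔ (∀ t : ℝ, (A t = 1 ∧ B t = 0) ∨ A t = 0)) := by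
  haveI : NeZero n := ⟨by omega⟩
  have hn0 : (n : ℝ) ≠ 0 := by positivity
  have hnpos : (0 : ℝ) < n := by positivity
  have h01 : (0 : Fin n) ≠ 1 := by
    simp [Fin.ext_iff, Fin.val_one', Nat.mod_eq_of_lt (by omega : 1 < n)]
  constructor
  · constructor
    · intro h t
      constructor
      · -- use z ≡ 1, y = t + single 0 1 - single 1 1
        set y : Fin n → ℝ := fun i => t + ((Pi.single (0 : Fin n) (1:ℝ) : Fin n → ℝ) i - (Pi.single (1 : Fin n) (1:ℝ) : Fin n → ℝ) i)
          with hy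
        set z : Fin n → ℝ := fun _ => (1:ℝ) with hz
        have hzsum : ∑ i, z i = n := by simp [hz]
        have hysum : ∑ i, y i = n * t := by
          simp [hy, Finset.sum_add_distrib, Finset.sum_sub_distrib,
            Finset.sum_pi_single', mul_comm]
        have hZpos : 0 < ∑ i, z i := by rw [hzsum]; exact hnpos
        have heq := congrFun (h y z (fun i => by norm_num [hz]) hZpos) (0 : Fin n)
        rw [RAB_RAB hn0] at heq
        conv_rhs at heq => rw [RAB]
        have ht : (∑ j, y j) / (∑ j, z j) = t := by
          rw [hysum, hzsum]; field_simp
        rw [ht, hysum, hzsum] at heq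
        have hy0 : y 0 = t + 1 := by simp [hy, Pi.single_eq_same, h01]
        rw [hy0] at heq
        have hz0 : z 0 = 1 := rfl
        rw [hz0] at heq
        have h1 : (n : ℝ) * t / n = t := by field_simp
        rw [h1] at heq
        have h2 : (1 : ℝ) - (n : ℝ) / n = 0 := by field_simp; ring
        rw [h2] at heq
        nlinarith [heq]
      · -- use y ≡ t*(n+1)/n, z = 1 + single 0 1
        set y : Fin n → ℝ := fun _ => t * (n + 1) / n with hy
        set z : Fin n → ℝ := fun i => 1 + (Pi.single (0 : Fin n) (1:ℝ) : Fin n → ℝ) i with hz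
        have hzsum : ∑ i, z i = n + 1 := by
          simp [hz, Finset.sum_add_distrib, Finset.sum_pi_single']
        have hysum : ∑ i, y i = t * (n + 1) := by
          rw [hy]; rw [Finset.sum_const, Finset.card_univ, Fintype.card_fin, nsmul_eq_mul]
          field_simp
        have hZpos : 0 < ∑ i, z i := by rw [hzsum]; positivity
        have hznn : ∀ i, 0 ≤ z i := by
          intro i
          rcases eq_or_ne i 0 with h | h
          · simp [hz, h, Pi.single_eq_same]
          · simp [hz, Pi.single_eq_of_ne h]
        have heq := congrFun (h y z hznn hZpos) (0 : Fin n)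
        rw [RAB_RAB hn0] at heq
        conv_rhs at heq => rw [RAB]
        have ht : (∑ j, y j) / (∑ j, z j) = t := by
          rw [hysum, hzsum]
          rw [mul_div_assoc, div_self (by positivity : ((n:ℝ)+1) ≠ 0), mul_one]
        rw [ht, hysum, hzsum] at heq
        have hy0 : y 0 = t * (n + 1) / n := rfl
        have hz0 : z 0 = 2 := by simp [hz, Pi.single_eq_same]; norm_num
        rw [hy0, hz0] at heq
        have h1 : t * ((n : ℝ) + 1) / n - t * (n + 1) / n = 0 := by ring
        have h2 : (2 : ℝ) - ((n : ℝ) + 1) / n ≠ 0 := by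
          have : (2 : ℝ) - ((n : ℝ) + 1) / n = (n - 1) / n := by field_simp; ring
          rw [this]
          have h2n : (2:ℝ) ≤ n := by exact_mod_cast hn
          exact ne_of_gt (div_pos (by linarith) (by linarith))
        have key : (2 - ((n : ℝ) + 1) / n) * (B t * (1 + A t))
            = (2 - ((n : ℝ) + 1) / n) * B t := by linarith [heq]
        exact mul_left_cancel₀ h2 key
    · intro h y z hz hZ
      funext i
      obtain ⟨hA, hB⟩ := h ((∑ j, y j) / ∑ j, z j)
      rw [RAB_RAB hn0, hA, hB, RAB]
  · constructor
    · intro h t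
      obtain ⟨h1, h2⟩ := h t
      rcases mul_eq_zero.1 (by nlinarith : A t * (A t - 1) = 0) with h0 | h0
      · right; exact h0
      · left
        have hA1 : A t = 1 := by linarith
        refine ⟨hA1, ?_⟩
        rw [hA1] at h2; linarith
    · intro h t
      rcases h t with ⟨h1, h2⟩ | h0
      · rw [h1, h2]; norm_num
      · rw [h0]; norm_num
end

section
/- For the family R_i(y,z) = α₁·y_i + α₂·(z_i/Z)·Y + (1 − α₁ − α₂)·(Y/n) with α₁, α₂ ∈ ℝ, the dummy axiom (R_i(y,z) = 0 whenever y_i = z_i = 0) holds for all problems on a set N with n ≥ 2 if and only if α₁ + α₂ = 1. -/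
noncomputable def linR {n : ℕ} (α₁ α₂ : ℝ) (y z : Fin n → ℝ) (i : Fin n) : ℝ :=
  α₁ * y i + α₂ * (z i / ∑ j, z j) * ∑ j, y j
    + (1 - α₁ - α₂) * ((∑ j, y j) / n)

theorem linR_of_dummy {n : ℕ} (α₁ α₂ : ℝ) {y z : Fin n → ℝ} {i : Fin n}
    (hy : y i = 0) (hz : z i = 0) :
    linR α₁ α₂ y z i = (1 - α₁ - α₂) * ((∑ j, y j) / n) := by
  simp [linR, hy, hz]

/-- Within the linear family, the dummy axiom holds for all problems iff `α₁ + α₂ = 1`. -/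
theorem linR_dummy_iff {n : ℕ} (hn : 2 ≤ n) (α₁ α₂ : ℝ) :
    (∀ y z : Fin n → ℝ, (∀ i, 0 ≤ z i) → 0 < ∑ i, z i →
      ∀ i, y i = 0 → z i = 0 → linR α₁ α₂ y z i = 0)
    ↔ α₁ + α₂ = 1 := by
  constructor
  · intro hdummy
    -- Agent `0` is a dummy in the problem where agent `1` alone has income and need `1`, so `Y = 1`.
    let e : Fin n → ℝ := Pi.single ⟨1, by omega⟩ 1
    have he₀ : e ⟨0, by omega⟩ = 0 := Pi.single_eq_of_ne (by simp) _
    have hsum : ∑ j, e j = 1 := Fintype.sum_pi_single' _ _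
    have he : 0 ≤ e := Pi.single_nonneg.2 zero_le_one
    have key := hdummy e e he (by rw [hsum]; exact one_pos) _ he₀ he₀
    rw [linR_of_dummy α₁ α₂ he₀ he₀, hsum] at key
    have hn0 : (n : ℝ) ≠ 0 := by positivity
    field_simp at key
    linarith
  · rintro hα y z - - i hy hz
    rw [linR_of_dummy α₁ α₂ hy hz, show 1 - α₁ - α₂ = 0 by linarith, zero_mul]
end
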